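/- The law of the weighted-insertion order Λ with weight w on [1,n] is given by P(Λ = λ) = w^{|F(λ)|} / Z(w,n) for every total order λ on [1,n], where F(λ) is the set of founders of λ and Z(w,n) = Σ_λ w^{|F(λ)|} is the normalizing constant. -/

import Mathlib

open scoped Classical

/-- The founders of a total order on positions `0,…,l.length-1`, where the
list entry `l[i]` is the arrival rank of position `i` (smaller = earlier in
the order): position `i` is a founder if it is order-below everything to its
left, or order-below everything to its right. -/
noncomputable def founders (l : List ℕ) : Finset ℕ :=
  (Finset.range l.length).filter fun i =>
    (∀ j < i, l.getD i 0 < l.getD j 0) ∨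
    (∀ j < l.length, i < j → l.getD i 0 < l.getD j 0)

/-- All total orders of `[1,n]`, encoded as permutation lists of `{0,…,n-1}`:
entry `l[i]` is the arrival rank of position `i`. -/
noncomputable def perms (n : ℕ) : Finset (List ℕ) :=
  (List.range n).permutations.toFinset

/-- The probability mass function of the weighted-insertion order with weight
`w` on `n` positions: elements `0,1,…,n-1` are inserted one by one in order of
arrival rank, element `k` being inserted (as the current order-maximum) at one
of the `k+1` gaps, the two endpoint gaps having weight `w` and interior gaps
weight `1`.  The mass of a list is computed by peeling off the last arrival. -/
noncomputable def wiP (w : ℝ) : ℕ → List ℕ → ℝ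
  | 0, l => if l = [] then 1 else 0
  | 1, l => if l = [0] then 1 else 0
  | (n + 2), l =>
      ((if l.idxOf (n + 1) = 0 ∨ l.idxOf (n + 1) = l.length - 1 then w else 1) /
          (2 * w + n)) * wiP w (n + 1) (l.erase (n + 1))

/-- `pFound w n k` : the probability that position `k` (1-based, `1 ≤ k ≤ n`)
is a founder of the weighted-insertion order with weight `w` on `[1,n]`. -/
noncomputable def pFound (w : ℝ) (n k : ℕ) : ℝ :=
  ∑ l ∈ perms n, if k - 1 ∈ founders l then wiP w n l else 0

/-- `sFound w n` : the expected number of founders of the weighted-insertion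
order with weight `w` on `[1,n]`. -/
noncomputable def sFound (w : ℝ) (n : ℕ) : ℝ :=
  ∑ l ∈ perms n, ((founders l).card : ℝ) * wiP w n l

/-- The restriction of the total order encoded by `l` to the block of
positions `off, off+1, …, off + s.length - 1` coincides with the total order
encoded by `s`. -/
def restrEq (l : List ℕ) (off : ℕ) (s : List ℕ) : Prop :=
  ∀ i < s.length, ∀ j < s.length,
    (l.getD (off + i) 0 < l.getD (off + j) 0 ↔ s.getD i 0 < s.getD j 0)

open List


lemma mem_perms {n : ℕ} {l : List ℕ} : l ∈ perms n ↔ l.Perm (List.range n) := by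
  simp [perms, List.mem_permutations]

noncomputable def Zc (w : ℝ) : ℕ → ℝ
  | 0 => 1
  | 1 => w
  | (n + 2) => (2 * w + n) * Zc w (n + 1)

lemma Zc_pos {w : ℝ} (hw : 0 < w) : ∀ n, 0 < Zc w n
  | 0 => one_pos
  | 1 => hw
  | (n + 2) => by
      have := Zc_pos hw (n + 1)
      have h2 : (0:ℝ) < 2 * w + n := by positivity
      simpa [Zc] using mul_pos h2 this

lemma erase_eq_eraseIdx_indexOf (a : ℕ) : ∀ l : List ℕ, l.erase a = l.eraseIdx (l.idxOf a)
  | [] => rfl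
  | b :: t => by
      by_cases hb : b = a
      · simp [hb]
      · have hba : (b == a) = false := by simpa using hb
        rw [List.erase_cons, List.idxOf_cons, hba]
        rw [erase_eq_eraseIdx_indexOf a t]
        simp

lemma insertIdx_getElem_eraseIdx :
    ∀ (l : List ℕ) (p : ℕ) (h : p < l.length), (l.eraseIdx p).insertIdx p l[p] = l
  | b :: t, 0, _ => rfl
  | b :: t, p + 1, h => by
      have := insertIdx_getElem_eraseIdx t p (by simpa using h)
      simpa [List.eraseIdx, List.insertIdx_succ_cons] using this

lemma indexOf_insertIdx (a : ℕ) :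
    ∀ (p : ℕ) (l : List ℕ), a ∉ l → p ≤ l.length → (l.insertIdx p a).idxOf a = p
  | 0, l, _, _ => by simp [List.insertIdx_zero, List.idxOf_cons]
  | p + 1, [], _, h => by simp at h
  | p + 1, b :: t, ha, h => by
      have hb : b ≠ a := fun hba => ha (by simp [hba])
      have := indexOf_insertIdx a p t (fun h' => ha (by simp [h'])) (by simpa using h)
      simp [List.insertIdx_succ_cons, List.idxOf_cons, hb, this]

lemma getD_insertIdx {l : List ℕ} {p : ℕ} (a : ℕ) (hp : p ≤ l.length) (i : ℕ) :
    (l.insertIdx p a).getD i 0 =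
      if i < p then l.getD i 0 else if i = p then a else l.getD (i - 1) 0 := by
  have hlen : (l.insertIdx p a).length = l.length + 1 := by simp [List.length_insertIdx, hp]
  rcases lt_trichotomy i p with h | h | h
  · rw [if_pos h]
    have hi : i < l.length := lt_of_lt_of_le h hp
    rw [List.getD_eq_getElem _ _ (by omega), List.getD_eq_getElem _ _ hi,
      List.getElem_insertIdx_of_lt h (by omega)]
  · rw [if_neg (by omega), if_pos h]
    subst h
    rw [List.getD_eq_getElem _ _ (by omega), List.getElem_insertIdx_self (by omega)]
  · rw [if_neg (by omega), if_neg (by omega)]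
    by_cases hi : i < l.length + 1
    · obtain ⟨k, rfl⟩ : ∃ k, i = p + k + 1 := ⟨i - p - 1, by omega⟩
      rw [List.getD_eq_getElem _ _ (by omega), List.getD_eq_getElem _ _ (n := p + k + 1 - 1) (by omega)]
      have := List.getElem_insertIdx_of_gt (l := l) (x := a) (i := p) (j := p + k + 1) (by omega) (by omega)
      simpa [show p + k + 1 - 1 = p + k by omega] using this
    · rw [List.getD_eq_default _ _ (by omega), List.getD_eq_default _ _ (by omega)]

lemma getD_lt_of_perm_range {n : ℕ} {l : List ℕ} (hl : l.Perm (List.range n)) {i : ℕ}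
    (hi : i < n) : l.getD i 0 < n := by
  have hlen : l.length = n := by simpa using hl.length_eq
  have h1 : l[i]'(by omega) ∈ l := List.getElem_mem _
  have h2 := (hl.mem_iff).1 h1
  rw [List.mem_range] at h2
  rw [List.getD_eq_getElem _ _ (by omega)]
  exact h2

lemma founders_insertIdx {n p : ℕ} {l' : List ℕ} (hl' : l'.Perm (List.range (n+1)))
    (hp : p ≤ n + 1) :
    (founders (l'.insertIdx p (n+1))).card =
      (founders l').card + (if p = 0 ∨ p = n + 1 then 1 else 0) := by
  have hlen' : l'.length = n + 1 := by simpa using hl'.length_eq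
  set L := l'.insertIdx p (n+1) with hL
  have hLlen : L.length = n + 2 := by
    rw [hL, List.length_insertIdx, if_pos (by omega), hlen']
  have hget : ∀ i, L.getD i 0 =
      if i < p then l'.getD i 0 else if i = p then n + 1 else l'.getD (i-1) 0 :=
    getD_insertIdx _ (by omega)
  have hlt : ∀ i, i < n + 1 → l'.getD i 0 < n + 1 := fun i hi => getD_lt_of_perm_range hl' hi
  set e : ℕ → ℕ := fun i => if i < p then i else i + 1 with he
  have hgete : ∀ i, i ≤ n → L.getD (e i) 0 = l'.getD i 0 := by
    intro i hi
    rw [hget]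
    by_cases h : i < p
    · simp [he, h]
    · have h1 : ¬ (i + 1 < p) := by omega
      have h2 : ¬ (i + 1 = p) := by omega
      simp [he, h, h1, h2]
  have claim1 : ∀ i, i < n + 1 → (e i ∈ founders L ↔ i ∈ founders l') := by
    intro i hi
    have hei : e i < n + 2 := by simp only [he]; split <;> omega
    simp only [founders, Finset.mem_filter, Finset.mem_range, hLlen, hlen']
    constructor
    · rintro ⟨-, h | h⟩
      · refine ⟨hi, Or.inl ?_⟩
        intro j hj
        have hej : e j < e i := by simp only [he]; split <;> split <;> omega
        have := h (e j) hej
        rwa [hgete i (by omega), hgete j (by omega)] at this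
      · refine ⟨hi, Or.inr ?_⟩
        intro j hj hij
        have hej : e i < e j := by simp only [he]; split <;> split <;> omega
        have hej2 : e j < n + 2 := by simp only [he]; split <;> omega
        have := h (e j) hej2 hej
        rwa [hgete i (by omega), hgete j (by omega)] at this
    · rintro ⟨-, h | h⟩
      · refine ⟨hei, Or.inl ?_⟩
        intro j hj
        rw [hgete i (by omega)]
        rcases lt_trichotomy j p with hjp | hjp | hjp
        · have hLj : L.getD j 0 = l'.getD j 0 := by rw [hget]; simp [hjp]
          rw [hLj]
          refine h j ?_
          simp only [he] at hj; split at hj <;> omega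
        · subst hjp
          have hLj : L.getD j 0 = n + 1 := by rw [hget]; simp
          rw [hLj]; exact hlt i (by omega)
        · have hLj : L.getD j 0 = l'.getD (j-1) 0 := by
            rw [hget, if_neg (by omega), if_neg (by omega)]
          rw [hLj]
          refine h (j-1) ?_
          simp only [he] at hj; split at hj <;> omega
      · refine ⟨hei, Or.inr ?_⟩
        intro j hj hij
        rw [hgete i (by omega)]
        rcases lt_trichotomy j p with hjp | hjp | hjp
        · have hLj : L.getD j 0 = l'.getD j 0 := by rw [hget]; simp [hjp]
          rw [hLj]
          refine h j (by omega) ?_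
          simp only [he] at hij; split at hij <;> omega
        · subst hjp
          have hLj : L.getD j 0 = n + 1 := by rw [hget]; simp
          rw [hLj]; exact hlt i (by omega)
        · have hLj : L.getD j 0 = l'.getD (j-1) 0 := by
            rw [hget, if_neg (by omega), if_neg (by omega)]
          rw [hLj]
          refine h (j-1) (by omega) ?_
          simp only [he] at hij; split at hij <;> omega
  have claim2 : p ∈ founders L ↔ (p = 0 ∨ p = n + 1) := by
    simp only [founders, Finset.mem_filter, Finset.mem_range, hLlen]
    have hgp : L.getD p 0 = n + 1 := by rw [hget]; simp
    constructor
    · rintro ⟨-, h | h⟩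
      · by_contra hc
        push_neg at hc
        have h0 : L.getD 0 0 = l'.getD 0 0 := by
          rw [hget]; simp [Nat.pos_of_ne_zero hc.1]
        have hh := h 0 (Nat.pos_of_ne_zero hc.1)
        rw [hgp, h0] at hh
        have := hlt 0 (by omega); omega
      · by_contra hc
        push_neg at hc
        have h1 : L.getD (n+1) 0 = l'.getD n 0 := by
          rw [hget, if_neg (by omega), if_neg (by omega)]
          norm_num
        have hh := h (n+1) (by omega) (by omega)
        rw [hgp, h1] at hh
        have := hlt n (by omega); omega
    · rintro (rfl | rfl)
      · exact ⟨by omega, Or.inl (by intro j hj; omega)⟩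
      · exact ⟨by omega, Or.inr (by intro j hj hij; omega)⟩
  have himg : founders L \ {p} = (founders l').image e := by
    ext x
    simp only [Finset.mem_sdiff, Finset.mem_singleton, Finset.mem_image]
    constructor
    · rintro ⟨hx, hxp⟩
      have hxr : x < n + 2 := by
        have := (Finset.mem_filter.1 hx).1; rwa [Finset.mem_range, hLlen] at this
      by_cases hxp2 : x < p
      · have hex : e x = x := by simp [he, hxp2]
        exact ⟨x, (claim1 x (by omega)).1 (by rwa [hex]), hex⟩
      · have hex : e (x - 1) = x := by
          simp only [he]; rw [if_neg (by omega)]; omega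
        exact ⟨x - 1, (claim1 (x - 1) (by omega)).1 (by rwa [hex]), hex⟩
    · rintro ⟨i, hif, rfl⟩
      have hin : i < n + 1 := by
        have := (Finset.mem_filter.1 hif).1; rwa [Finset.mem_range, hlen'] at this
      refine ⟨(claim1 i hin).2 hif, ?_⟩
      simp only [he]; split <;> omega
  have hecard : ((founders l').image e).card = (founders l').card :=
    Finset.card_image_of_injective _ (fun a b hab => by
      simp only [he] at hab; split at hab <;> split at hab <;> omega)
  have hpnot : p ∉ (founders l').image e := by
    simp only [Finset.mem_image, not_exists]
    rintro i ⟨-, hie⟩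
    revert hie
    simp only [he]; split <;> omega
  by_cases hcase : p = 0 ∨ p = n + 1
  · have hpL : p ∈ founders L := claim2.2 hcase
    have hfl : founders L = insert p ((founders l').image e) := by
      rw [← himg]
      ext x
      simp only [Finset.mem_insert, Finset.mem_sdiff, Finset.mem_singleton]
      constructor
      · intro hx
        by_cases hxp : x = p
        · exact Or.inl hxp
        · exact Or.inr ⟨hx, hxp⟩
      · rintro (rfl | ⟨hx, -⟩)
        · exact hpL
        · exact hx
    rw [hfl, Finset.card_insert_of_notMem hpnot, hecard, if_pos hcase]
  · have hpL : p ∉ founders L := fun h => hcase (claim2.1 h)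
    have hfl : founders L = (founders l').image e := by
      rw [← himg]
      ext x
      simp only [Finset.mem_sdiff, Finset.mem_singleton]
      exact ⟨fun hx => ⟨hx, fun h => hpL (h ▸ hx)⟩, fun hx => hx.1⟩
    rw [hfl, hecard, if_neg hcase]
    simp

lemma range_erase_last (n : ℕ) : (List.range (n+1)).erase n = List.range n := by
  rw [List.range_succ, List.erase_append_right _ (by simp)]
  simp

lemma erase_perm_range {n : ℕ} {l : List ℕ} (hl : l.Perm (List.range (n+2))) :
    (l.erase (n+1)).Perm (List.range (n+1)) := by
  have := hl.erase (n+1)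
  rwa [range_erase_last (n+1)] at this

lemma indexOf_lt' {n : ℕ} {l : List ℕ} (hl : l.Perm (List.range (n+2))) :
    l.idxOf (n+1) < n + 2 := by
  have hlen : l.length = n + 2 := by simpa using hl.length_eq
  have hmem : (n+1) ∈ l := hl.mem_iff.2 (by simp)
  have := List.idxOf_lt_length_iff.2 hmem
  omega

lemma reconstruct {n : ℕ} {l : List ℕ} (hl : l.Perm (List.range (n+2))) :
    (l.erase (n+1)).insertIdx (l.idxOf (n+1)) (n+1) = l := by
  have hlen : l.length = n + 2 := by simpa using hl.length_eq
  have hp : l.idxOf (n+1) < l.length := by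
    have := indexOf_lt' hl; omega
  have hg : l[l.idxOf (n+1)]'hp = n + 1 := List.getElem_idxOf hp
  have h := insertIdx_getElem_eraseIdx l _ hp
  rw [hg] at h
  rw [erase_eq_eraseIdx_indexOf]
  exact h

lemma insertIdx_mem_perms {n p : ℕ} {l' : List ℕ} (hl' : l'.Perm (List.range (n+1)))
    (hp : p ≤ n + 1) : l'.insertIdx p (n+1) ∈ perms (n+2) := by
  rw [mem_perms]
  have hlen' : l'.length = n + 1 := by simpa using hl'.length_eq
  have h1 : (l'.insertIdx p (n+1)).Perm ((n+1) :: l') :=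
    List.perm_insertIdx _ _ (by omega)
  refine h1.trans ?_
  have h2 : ((n+1) :: l').Perm ((n+1) :: List.range (n+1)) := hl'.cons _
  refine h2.trans ?_
  conv_rhs => rw [List.range_succ]
  exact (List.perm_append_singleton _ _).symm

lemma perms_one : perms 1 = {[0]} := by
  ext l
  rw [mem_perms, Finset.mem_singleton]
  rw [show List.range 1 = [0] from rfl]
  exact List.perm_singleton

lemma founders_zero : (founders [0]).card = 1 := by
  have : founders [0] = {0} := by
    ext i
    simp only [founders, Finset.mem_filter, Finset.mem_range, Finset.mem_singleton]
    constructor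
    · rintro ⟨h, -⟩; simpa using h
    · rintro rfl
      exact ⟨by simp, Or.inl (by intro j hj; omega)⟩
  rw [this]; simp

lemma wiP_closed (w : ℝ) (hw : 0 < w) :
    ∀ n, ∀ l ∈ perms (n + 1), wiP w (n + 1) l = w ^ (founders l).card / Zc w (n + 1) := by
  intro n
  induction n with
  | zero =>
      intro l hl
      rw [perms_one, Finset.mem_singleton] at hl
      subst hl
      rw [founders_zero]
      show wiP w 1 [0] = _
      rw [show wiP w 1 [0] = 1 from by simp [wiP]]
      rw [show Zc w 1 = w from rfl, pow_one, div_self hw.ne']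
  | succ n ih =>
      intro l hl
      rw [mem_perms] at hl
      have hlen : l.length = n + 2 := by simpa using hl.length_eq
      have hp : l.idxOf (n+1) < n + 2 := indexOf_lt' hl
      have hl' : (l.erase (n+1)).Perm (List.range (n+1)) := erase_perm_range hl
      have hl'm : l.erase (n+1) ∈ perms (n+1) := mem_perms.2 hl'
      have hrec : (l.erase (n+1)).insertIdx (l.idxOf (n+1)) (n+1) = l := reconstruct hl
      have hfc : (founders l).card = (founders (l.erase (n+1))).card +
          (if l.idxOf (n+1) = 0 ∨ l.idxOf (n+1) = n + 1 then 1 else 0) := by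
        conv_lhs => rw [← hrec]
        exact founders_insertIdx hl' (by omega)
      have hZ : Zc w (n+1) ≠ 0 := (Zc_pos hw _).ne'
      have h2w : (2*w + (n:ℝ)) ≠ 0 := by positivity
      show ((if l.idxOf (n + 1) = 0 ∨ l.idxOf (n + 1) = l.length - 1 then w else 1) /
          (2 * w + n)) * wiP w (n + 1) (l.erase (n + 1)) = _
      rw [ih _ hl'm, hfc, hlen]
      rw [show Zc w (n + 2) = (2 * w + n) * Zc w (n + 1) from rfl]
      by_cases hc : l.idxOf (n+1) = 0 ∨ l.idxOf (n+1) = n + 2 - 1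
      · have hc' : l.idxOf (n+1) = 0 ∨ l.idxOf (n+1) = n + 1 := by omega
        rw [if_pos hc, if_pos hc', pow_succ]
        field_simp
      · have hc' : ¬(l.idxOf (n+1) = 0 ∨ l.idxOf (n+1) = n + 1) := by omega
        rw [if_neg hc, if_neg hc']
        field_simp
        rw [add_zero]

lemma sum_endpoint (w : ℝ) (n : ℕ) :
    ∑ p ∈ Finset.range (n+2), (if p = 0 ∨ p = n+1 then w else 1) = 2*w + n := by
  have hcong : ∀ p ∈ Finset.range (n+2), (if p = 0 ∨ p = n+1 then w else 1) =
      1 + ((if p = 0 then w - 1 else 0) + (if p = n+1 then w - 1 else 0)) := by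
    intro p _
    by_cases h0 : p = 0 <;> by_cases h1 : p = n+1
    · omega
    · simp [h0, h1]
    · simp [h0, h1]
    · simp [h0, h1]
  rw [Finset.sum_congr rfl hcong, Finset.sum_add_distrib, Finset.sum_add_distrib,
    Finset.sum_const, Finset.sum_ite_eq' _ 0 (fun _ => w - 1),
    Finset.sum_ite_eq' _ (n+1) (fun _ => w - 1)]
  rw [if_pos (by simp), if_pos (by simp [Finset.mem_range]), Finset.card_range]
  push_cast
  ring

lemma sum_pow_founders (w : ℝ) (hw : 0 < w) :
    ∀ n, (∑ l ∈ perms (n+1), w ^ (founders l).card) = Zc w (n+1) := by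
  intro n
  induction n with
  | zero => rw [perms_one]; simp [founders_zero, Zc]
  | succ n ih =>
      have hnotmem : ∀ l' ∈ perms (n+1), (n+1) ∉ l' := by
        intro l' hl'
        rw [mem_perms] at hl'
        intro h
        have := hl'.mem_iff.1 h
        simp at this
      have key : (∑ l ∈ perms (n+2), w ^ (founders l).card)
          = ∑ q ∈ (Finset.range (n+2)) ×ˢ perms (n+1),
              w ^ (founders (q.2.insertIdx q.1 (n+1))).card := by
        refine Finset.sum_nbij' (fun l => (l.idxOf (n+1), l.erase (n+1)))
          (fun q => q.2.insertIdx q.1 (n+1)) ?_ ?_ ?_ ?_ ?_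
        · intro l hl
          rw [mem_perms] at hl
          rw [Finset.mem_product]
          exact ⟨Finset.mem_range.2 (indexOf_lt' hl), mem_perms.2 (erase_perm_range hl)⟩
        · intro q hq
          rw [Finset.mem_product] at hq
          exact insertIdx_mem_perms (mem_perms.1 hq.2)
            (by have := Finset.mem_range.1 hq.1; omega)
        · intro l hl
          rw [mem_perms] at hl
          exact reconstruct hl
        · intro q hq
          rw [Finset.mem_product] at hq
          have hq1 := Finset.mem_range.1 hq.1
          have hql := mem_perms.1 hq.2
          have hlen' : q.2.length = n + 1 := by simpa using hql.length_eq
          have hnm : (n+1) ∉ q.2 := hnotmem _ hq.2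
          have hidx : (q.2.insertIdx q.1 (n+1)).idxOf (n+1) = q.1 :=
            indexOf_insertIdx _ _ _ hnm (by omega)
          have herase : (q.2.insertIdx q.1 (n+1)).erase (n+1) = q.2 := by
            rw [erase_eq_eraseIdx_indexOf, hidx, List.eraseIdx_insertIdx_self]
          rw [Prod.ext_iff]
          exact ⟨hidx, herase⟩
        · intro l hl
          rw [mem_perms] at hl
          rw [reconstruct hl]
      rw [key, Finset.sum_product]
      have hinner : ∀ p ∈ Finset.range (n+2),
          (∑ l' ∈ perms (n+1), w ^ (founders (l'.insertIdx p (n+1))).card)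
            = (if p = 0 ∨ p = n+1 then w else 1) * Zc w (n+1) := by
        intro p hp
        rw [← ih, Finset.mul_sum]
        refine Finset.sum_congr rfl ?_
        intro l' hl'
        rw [founders_insertIdx (mem_perms.1 hl') (by have := Finset.mem_range.1 hp; omega)]
        by_cases hc : p = 0 ∨ p = n + 1
        · rw [if_pos hc, if_pos hc, pow_add, pow_one]; ring
        · rw [if_neg hc, if_neg hc, pow_add, pow_zero]; ring
      rw [Finset.sum_congr rfl hinner, ← Finset.sum_mul, sum_endpoint]
      rw [show Zc w (n + 1 + 1) = (2 * w + n) * Zc w (n + 1) from rfl]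


/-- the law of the weighted-insertion order with weight `w` on
`[1,n]` is `P(Λ = λ) = w^{|F(λ)|} / Z(w,n)` with
`Z(w,n) = Σ_λ w^{|F(λ)|}`. -/
theorem wiP_eq_founder_weight (w : ℝ) (hw : 0 < w) (n : ℕ) (hn : 1 ≤ n) :
    ∀ l ∈ perms n,
      wiP w n l = w ^ (founders l).card / (∑ l' ∈ perms n, w ^ (founders l').card) := by
  obtain ⟨m, rfl⟩ : ∃ m, n = m + 1 := ⟨n - 1, by omega⟩
  intro l hl
  rw [wiP_closed w hw m l hl, sum_pow_founders w hw m]
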